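/- arXiv:2210.01261 — 7 statements merged into one kernel-verified Lean document; each statement's English description precedes it below -/
import Mathlib

section
/- Let e ≥ 0, ā > 0, b̄ ≥ e and p̄, q̄ ∈ ℝ. Define b = ā + e + p̄²(b̄ − e/2), p = −p̄(2b̄ − e)/(2b − e), q = q̄ + (e/2)(p − p̄ − 1), and a = (b̄ − e) − p²(b − e/2). Then b > e (in particular 2b − e > 0), the matrix of T_{p,p̄} has determinant 1 (so T_{p,p̄} ∈ GL⁺(2,ℝ)), and for every v ∈ ℝ⁴ one has Z_{a,b,p,q}(φ_e(v)) = T_{p,p̄}(Z_{ā,b̄,p̄,q̄}(v)). (Computational core of the main theorem: Φ·σ_{ā,B̄,ω̄} agrees with σ_{a,B,ω} up to the G̃L⁺(2,ℝ)-action.) -/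
/-- Central charge `Z_{a,b,p,q}` in Chern character table coordinates `(n,d,c,s)`. -/
noncomputable def Zcc (e a b p q : ℝ) (v : ℝ × ℝ × ℝ × ℝ) : ℂ :=
  ⟨-v.2.2.2 + p * v.2.2.1 + q * v.2.1 + v.1 * (e * p ^ 2 / 2 - p * q + a),
    v.2.2.1 + b * v.2.1 - v.1 * (q + p * (b - e))⟩

/-- Action of the relative Fourier–Mukai transform on Chern character tables. -/
noncomputable def phiFM (e : ℝ) (v : ℝ × ℝ × ℝ × ℝ) : ℝ × ℝ × ℝ × ℝ :=
  (v.2.1, -v.1, v.2.2.2 - e / 2 * v.2.1 + e * v.1,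
    -(v.2.2.1 + e * v.2.1 - e / 2 * v.1))

/-- The linear automorphism of `ℂ ≅ ℝ²` with matrix `[[-p, 1 + p·p̄], [-1, p̄]]`. -/
noncomputable def Tmat (p pbar : ℝ) (w : ℂ) : ℂ :=
  ⟨-p * w.re + (1 + p * pbar) * w.im, -w.re + pbar * w.im⟩

theorem stmt0 (e abar bbar pbar qbar b p q a : ℝ)
    (he : 0 ≤ e) (habar : 0 < abar) (hbbar : e ≤ bbar)
    (hb : b = abar + e + pbar ^ 2 * (bbar - e / 2))
    (hp : p = -pbar * (2 * bbar - e) / (2 * b - e))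
    (hq : q = qbar + e / 2 * (p - pbar - 1))
    (ha : a = (bbar - e) - p ^ 2 * (b - e / 2)) :
    e < b ∧ 0 < 2 * b - e ∧
    Matrix.det !![-p, 1 + p * pbar; -1, pbar] = 1 ∧
    ∀ v : ℝ × ℝ × ℝ × ℝ,
      Zcc e a b p q (phiFM e v) = Tmat p pbar (Zcc e abar bbar pbar qbar v) := by
  have hbe : e < b := by nlinarith [sq_nonneg pbar, sq_nonneg (pbar * e)]
  have h2 : (0:ℝ) < 2 * b - e := by linarith
  have h2' : 2 * b - e ≠ 0 := ne_of_gt h2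
  have hpe : p * (2 * b - e) = -pbar * (2 * bbar - e) := by
    rw [hp]; field_simp
  have hpb : p * (b - e / 2) = -(pbar * (bbar - e / 2)) := by linarith
  refine ⟨hbe, h2, by simp [Matrix.det_fin_two_of], ?_⟩
  intro v
  obtain ⟨n, d, c, s⟩ := v
  subst hq ha
  apply Complex.ext <;> simp only [Zcc, phiFM, Tmat]
  · linear_combination (n - d * p) * hpb + (-n * p) * hb
  · linear_combination (-d) * hpb + (-n) * hb
end

section
/- Fix e ∈ ℝ and reals a, b, p, q, ā, b̄, p̄, q̄. The identity Z_{a,b,p,q}(φ_e(v)) = T_{p,p̄}(Z_{ā,b̄,p̄,q̄}(v)) holds for all v ∈ ℝ⁴ if and only if the four equations of the constraint system (★) hold. -/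
/-- The constraint system (★). -/
def ConstraintSystem (e a b p q abar bbar pbar qbar : ℝ) : Prop :=
  (-bbar * pbar + qbar = e / 2 + (b - e) * p + q) ∧
  (abar + (bbar - e / 2) * pbar ^ 2 = b - e) ∧
  (bbar - e = a + (b - e / 2) * p ^ 2) ∧
  ((bbar - e) * pbar + qbar = e / 2 - b * p + q)

theorem stmt1 (e a b p q abar bbar pbar qbar : ℝ) :
    (∀ v : ℝ × ℝ × ℝ × ℝ,
        Zcc e a b p q (phiFM e v) = Tmat p pbar (Zcc e abar bbar pbar qbar v)) ↔
    ConstraintSystem e a b p q abar bbar pbar qbar := by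
  constructor
  · intro h
    have h1 := h (1, 0, 0, 0)
    have h2 := h (0, 1, 0, 0)
    simp only [Zcc, phiFM, Tmat, Complex.ext_iff] at h1 h2
    obtain ⟨h1r, h1i⟩ := h1
    obtain ⟨h2r, h2i⟩ := h2
    refine ⟨?_, ?_, ?_, ?_⟩
    · linear_combination h2i
    · linear_combination h1i
    · linear_combination p * h2i - h2r
    · linear_combination h1r - p * h1i
  · rintro ⟨c1, c2, c3, c4⟩ v
    simp only [Zcc, phiFM, Tmat, Complex.ext_iff]
    constructor
    · linear_combination v.1 * (p * c2 + c4) + v.2.1 * (p * c1 - c3)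
    · linear_combination v.1 * c2 + v.2.1 * c1
end

section
/- Let e ∈ ℝ and a, b, p, q ∈ ℝ with V := 2b − e > 0. Set U = 2a + e and V̄ = U + p²·V, assume V̄ > 0, and define p̄ = −p·V/V̄, q̄ = q + (e/2)(p̄ − p + 1), Ū = V − p̄²·V̄, b̄ = (V̄ + e)/2, ā = (Ū − e)/2. Then for every v ∈ ℝ⁴ one has T'_{p,p̄}(Z_{a,b,p,q}(v)) = Z_{ā,b̄,p̄,q̄}(−ψ_e(v)), where T'_{p,p̄} is the ℝ-linear automorphism of ℂ ≅ ℝ² whose matrix in the basis (Re, Im) is [[p̄, −1 − p·p̄],[1, −p]]. (This solves T'·Z_{a,B,ω} = Z_{ā,B̄,ω̄} ∘ Φ̂[1] on Chern character tables.) -/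
/-- Action of the quasi-inverse relative Fourier–Mukai transform `Φ̂` on Chern
character tables. -/
noncomputable def psiFM (e : ℝ) (v : ℝ × ℝ × ℝ × ℝ) : ℝ × ℝ × ℝ × ℝ :=
  (v.2.1, -v.1, v.2.2.2 + e / 2 * v.2.1 + e * v.1,
    -(v.2.2.1 + e * v.2.1 + e / 2 * v.1))

/-- The linear automorphism of `ℂ ≅ ℝ²` with matrix `[[p̄, −1 − p·p̄],[1, −p]]`. -/
noncomputable def Tmat' (p pbar : ℝ) (w : ℂ) : ℂ :=
  ⟨pbar * w.re + (-1 - p * pbar) * w.im, w.re + -p * w.im⟩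

theorem stmt5 (e a b p q : ℝ) (V U Vbar Ubar pbar qbar bbar abar : ℝ)
    (hV : V = 2 * b - e) (hVpos : 0 < V)
    (hU : U = 2 * a + e)
    (hVbar : Vbar = U + p ^ 2 * V) (hVbarpos : 0 < Vbar)
    (hpbar : pbar = -p * V / Vbar)
    (hqbar : qbar = q + e / 2 * (pbar - p + 1))
    (hUbar : Ubar = V - pbar ^ 2 * Vbar)
    (hbbar : bbar = (Vbar + e) / 2)
    (habar : abar = (Ubar - e) / 2) :
    ∀ v : ℝ × ℝ × ℝ × ℝ,
      Tmat' p pbar (Zcc e a b p q v) = Zcc e abar bbar pbar qbar (-psiFM e v) := by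
  intro v
  have hVne : Vbar ≠ 0 := ne_of_gt hVbarpos
  have hp : pbar * Vbar = -p * V := by rw [hpbar]; field_simp
  subst hV hU hqbar hUbar hbbar habar hVbar
  obtain ⟨n, d, c, s⟩ := v
  apply Complex.ext
  · simp only [Tmat', Zcc, psiFM, Prod.neg_mk]
    linear_combination (-(d * pbar) / 2 + n / 2) * hp
  · simp only [Tmat', Zcc, psiFM, Prod.neg_mk]
    linear_combination (-d / 2) * hp
end

section
/- Let w, n, r, ρ, x be positive real numbers and let ξ, s, σ, a be reals with 0 < ξ < x. Set μ = x/r and μ_A = ξ/ρ and assume: (i) μ_A < μ; (ii) n(μ − μ_A) ≥ 1/(rρw); (iii) a(μ − μ_A) = (σ/ρ)μ − (s/r)μ_A; (iv) ξ² − 2wρσ ≥ 0; (v) x² − 2wrs ≥ 0. Then a ≤ (n/2)·(x/r)·(x² − 2wrs). -/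
/-!
Write `μ = x/r`, `μ_A = ξ/ρ`. Bogomolov–Gieseker for `A` bounds `σ/ρ` by `μ_A²/(2w)`, and for `E`
it says `δ := μ²/(2w) - s/r = Δ(E)/(2wr²) ≥ 0`. Substituting into the wall equation gives
`a (μ - μ_A) ≤ μ_A δ - μ μ_A (μ - μ_A)/(2w) ≤ μ_A δ`. The integrality condition bounds
`1/(μ - μ_A)` by `n r ρ w`, so `a ≤ n ξ Δ(E)/(2r)`, and `ξ < x` finishes.
-/

lemma div_le_sq_div_of_bogomolov {w ρ ξ σ : ℝ} (hw : 0 < w) (hρ : 0 < ρ)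
    (hΔ : ξ ^ 2 - 2 * w * ρ * σ ≥ 0) : σ / ρ ≤ (ξ / ρ) ^ 2 / (2 * w) := by
  rw [div_pow, div_div, div_le_div_iff₀ hρ (by positivity)]
  nlinarith

lemma wall_mul_gap_le {w μ μA a c cA : ℝ} (hw : 0 < w) (hμA : 0 ≤ μA) (hgap : μA ≤ μ)
    (hcA : cA ≤ μA ^ 2 / (2 * w)) (hwall : a * (μ - μA) = cA * μ - c * μA) :
    a * (μ - μA) ≤ μA * (μ ^ 2 / (2 * w) - c) := by
  have hμ : 0 ≤ μ := hμA.trans hgap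
  have hcorr : 0 ≤ μ * μA * (μ - μA) / (2 * w) := by
    have := sub_nonneg.mpr hgap
    positivity
  calc a * (μ - μA) = cA * μ - c * μA := hwall
    _ ≤ μA ^ 2 / (2 * w) * μ - c * μA := by gcongr
    _ = μA * (μ ^ 2 / (2 * w) - c) - μ * μA * (μ - μA) / (2 * w) := by ring
    _ ≤ μA * (μ ^ 2 / (2 * w) - c) := sub_le_self _ hcorr

lemma le_mul_of_mul_le_of_inv_le_mul {a b g k n : ℝ} (hg : 0 < g) (hk : 0 < k) (hb : 0 ≤ b)
    (hab : a * g ≤ b) (hgk : 1 / k ≤ n * g) : a ≤ n * k * b := by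
  have hone : 1 ≤ n * k * g := by
    rw [div_le_iff₀ hk] at hgk
    linarith
  refine le_of_mul_le_mul_right ?_ hg
  calc a * g ≤ b := hab
    _ ≤ b * (n * k * g) := le_mul_of_one_le_right hb hone
    _ = n * k * b * g := by ring

theorem stmt12_general (w n r ρ x ξ s σ a : ℝ)
    (hw : 0 < w) (hn : 0 < n) (hr : 0 < r) (hρ : 0 < ρ)
    (hξ0 : 0 < ξ) (hξx : ξ < x)
    (μ μA : ℝ) (hμ : μ = x / r) (hμA : μA = ξ / ρ)
    (h1 : μA < μ)
    (h2 : n * (μ - μA) ≥ 1 / (r * ρ * w))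
    (h3 : a * (μ - μA) = σ / ρ * μ - s / r * μA)
    (h4 : ξ ^ 2 - 2 * w * ρ * σ ≥ 0)
    (h5 : x ^ 2 - 2 * w * r * s ≥ 0) :
    a ≤ n / 2 * (x / r) * (x ^ 2 - 2 * w * r * s) := by
  subst hμ hμA
  have hδ : (x / r) ^ 2 / (2 * w) - s / r = (x ^ 2 - 2 * w * r * s) / (2 * w * r ^ 2) := by
    field_simp
  have hwall := wall_mul_gap_le hw (by positivity) h1.le
    (div_le_sq_div_of_bogomolov hw hρ h4) h3
  rw [hδ] at hwall
  calc a ≤ n * (r * ρ * w) * (ξ / ρ * ((x ^ 2 - 2 * w * r * s) / (2 * w * r ^ 2))) :=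
        le_mul_of_mul_le_of_inv_le_mul (sub_pos.mpr h1) (by positivity) (by positivity) hwall h2
    _ = n / 2 * (ξ / r) * (x ^ 2 - 2 * w * r * s) := by field_simp
    _ ≤ n / 2 * (x / r) * (x ^ 2 - 2 * w * r * s) := by gcongr

theorem stmt12 (w n r ρ x ξ s σ a : ℝ)
    (hw : 0 < w) (hn : 0 < n) (hr : 0 < r) (hρ : 0 < ρ) (hx : 0 < x)
    (hξ0 : 0 < ξ) (hξx : ξ < x)
    (μ μA : ℝ) (hμ : μ = x / r) (hμA : μA = ξ / ρ)
    (h1 : μA < μ)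
    (h2 : n * (μ - μA) ≥ 1 / (r * ρ * w))
    (h3 : a * (μ - μA) = σ / ρ * μ - s / r * μA)
    (h4 : ξ ^ 2 - 2 * w * ρ * σ ≥ 0)
    (h5 : x ^ 2 - 2 * w * r * s ≥ 0) :
    a ≤ n / 2 * (x / r) * (x ^ 2 - 2 * w * r * s) :=
  stmt12_general w n r ρ x ξ s σ a hw hn hr hρ hξ0 hξx μ μA hμ hμA h1 h2 h3 h4 h5
end

section
/- Let w, C, ρ be positive real numbers and let ξ, σ, s, a be reals. Set m = ξ/ρ and assume 0 < m < C, a = σ/ρ − m·(s/C), and ξ² − 2wρσ ≥ 0. Then a ≤ max{C²/(2w), C²/(2w) − s}. -/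
theorem stmt13 (w C ρ ξ σ s a : ℝ)
    (hw : 0 < w) (hC : 0 < C) (hρ : 0 < ρ)
    (m : ℝ) (hm : m = ξ / ρ)
    (hm0 : 0 < m) (hmC : m < C)
    (hwall : a = σ / ρ - m * (s / C))
    (hBG : ξ ^ 2 - 2 * w * ρ * σ ≥ 0) :
    a ≤ max (C ^ 2 / (2 * w)) (C ^ 2 / (2 * w) - s) := by
  have hξ : ξ = m * ρ := by field_simp at hm; linarith
  rw [hξ] at hBG
  have h1 : σ / ρ ≤ m ^ 2 / (2 * w) := by
    rw [div_le_div_iff₀ hρ (by positivity)]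
    nlinarith [mul_pos hw hρ]
  have h2 : a ≤ m ^ 2 / (2 * w) - m * (s / C) := by linarith
  rcases le_or_gt 0 (C ^ 2 / (2 * w) - s) with h | h
  · apply le_trans _ (le_max_right _ _)
    have hs : s * (2 * w) ≤ C ^ 2 := by
      have hs' : s ≤ C ^ 2 / (2 * w) := by linarith
      exact (le_div_iff₀ (by positivity)).mp hs'
    have expand : (C ^ 2 / (2 * w) - s) - (m ^ 2 / (2 * w) - m * (s / C)) =
        ((C - m) * (C * (C + m) - 2 * w * s)) / (2 * w * C) := by
      field_simp; ring
    have hnn : 0 ≤ (C ^ 2 / (2 * w) - s) - (m ^ 2 / (2 * w) - m * (s / C)) := by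
      rw [expand]
      apply div_nonneg _ (by positivity)
      apply mul_nonneg (by linarith)
      nlinarith [mul_pos hC hm0]
    linarith
  · apply le_trans _ (le_max_left _ _)
    have hs : 0 < s := by
      have : 0 < C ^ 2 / (2 * w) := by positivity
      linarith
    have hA : m ^ 2 / (2 * w) ≤ C ^ 2 / (2 * w) := by gcongr <;> nlinarith
    have hB : 0 ≤ m * (s / C) := by positivity
    linarith
end

section
/- Let w, n, r, ρ, C be positive real numbers and let ξ, s, σ, a be reals with 0 < ξ < C. Set μ = C/r and μ_A = ξ/ρ and assume: (i) μ_A < μ; (ii) n(μ − μ_A) ≥ 1/(rρ); (iii) a(μ − μ_A) = (σ/ρ)μ − (s/r)μ_A; (iv) ξ² − 2wρσ ≥ 0. Then a < max{ nC³/(2rw), nC³/(2rw) − nsC }. -/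
/-!
Clearing denominators, the wall equation reads `a D = σ C - s ξ` with `D = r ρ (μ - μ_A) > 0`,
and the integrality condition says `n D ≥ 1`. Bogomolov–Gieseker gives `2 w σ ≤ ξ μ_A`, and
`ξ μ_A < C μ` because both factors are smaller, so `σ C < C³ / (2 r w)`. Hence `a D` is below
`C³ / (2 r w) - s ξ`, which lies between `C³ / (2 r w)` and `C³ / (2 r w) - s C` since `0 < ξ < C`;
dividing by `D ≥ 1 / n` gives the bound.
-/

section OrderedRing

variable {α : Type*} [CommRing α] [LinearOrder α] [IsStrictOrderedRing α]

theorem lt_mul_of_mul_lt_of_one_le_mul {a D K n : α} (hD : 0 ≤ D) (hK : 0 ≤ K)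
    (h : a * D < K) (hn : 1 ≤ n * D) : a < n * K := by
  refine lt_of_mul_lt_mul_right ?_ hD
  calc a * D < K := h
    _ ≤ K * (n * D) := le_mul_of_one_le_right hK hn
    _ = n * K * D := by ring

theorem sub_mul_le_max_sub_mul (X s : α) {ξ C : α} (hξ : 0 ≤ ξ) (hξC : ξ ≤ C) :
    X - s * ξ ≤ max X (X - s * C) := by
  rcases le_total 0 s with hs | hs
  · exact le_max_of_le_left (sub_le_self _ (mul_nonneg hs hξ))
  · exact le_max_of_le_right (sub_le_sub_left (mul_le_mul_of_nonpos_left hξC hs) X)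

end OrderedRing

theorem stmt14 (w n r ρ C ξ s σ a : ℝ)
    (hw : 0 < w) (hn : 0 < n) (hr : 0 < r) (hρ : 0 < ρ) (hC : 0 < C)
    (hξ0 : 0 < ξ) (hξC : ξ < C)
    (μ μA : ℝ) (hμ : μ = C / r) (hμA : μA = ξ / ρ)
    (h1 : μA < μ)
    (h2 : n * (μ - μA) ≥ 1 / (r * ρ))
    (h3 : a * (μ - μA) = σ / ρ * μ - s / r * μA)
    (h4 : ξ ^ 2 - 2 * w * ρ * σ ≥ 0) :
    a < max (n * C ^ 3 / (2 * r * w)) (n * C ^ 3 / (2 * r * w) - n * s * C) := by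
  have hrμ : r * μ = C := by rw [hμ]; field_simp
  have hρμA : ρ * μA = ξ := by rw [hμA]; field_simp
  have hμA0 : 0 < μA := hμA ▸ div_pos hξ0 hρ
  set X := C ^ 3 / (2 * r * w)
  set D := r * ρ * (μ - μA)
  have hD : 0 < D := mul_pos (mul_pos hr hρ) (sub_pos.2 h1)
  have hnD : 1 ≤ n * D := by linarith [(div_le_iff₀ (mul_pos hr hρ)).1 h2]
  have haD : a * D = σ * C - s * ξ := by
    rw [show a * D = r * ρ * (a * (μ - μA)) by ring, h3, ← hrμ, ← hρμA]
    field_simp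
  have hbogomolov : 2 * w * σ ≤ ξ * μA := by nlinarith
  have hslope : ξ * μA < C * μ := mul_lt_mul'' hξC h1 hξ0.le hμA0.le
  have hσC : σ * C < X := by
    rw [lt_div_iff₀ (by positivity)]
    calc σ * C * (2 * r * w) = 2 * w * σ * (C * r) := by ring
      _ < C * μ * (C * r) :=
          mul_lt_mul_of_pos_right (hbogomolov.trans_lt hslope) (mul_pos hC hr)
      _ = C ^ 3 := by linear_combination C ^ 2 * hrμ
  have hK : a * D < max X (X - s * C) :=
    (sub_mul_le_max_sub_mul X s hξ0.le hξC.le).trans_lt' (by linarith)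
  have hK0 : 0 ≤ max X (X - s * C) := le_max_of_le_left (by positivity)
  calc a < n * max X (X - s * C) := lt_mul_of_mul_lt_of_one_le_mul hD.le hK0 hK hnD
    _ = _ := by rw [mul_max_of_nonneg _ _ hn.le]; congr 1 <;> ring
end

section
/- Let λ, z ∈ ℝ with z > λ², and set e = 2, ā = z − λ², b̄ = 2, p̄ = λ, q̄ = 0. Then the solution formulas b = ā + e + p̄²(b̄ − e/2), p = −p̄(2b̄ − e)/(2b − e), q = q̄ + (e/2)(p − p̄ − 1), a = (b̄ − e) − p²(b − e/2) yield b = z + 2, p = −λ/(z+1), q = −λ(1/(z+1) + 1) − 1, and a = −λ²/(z+1); moreover b > 2 = e and −1 + 1/(z+1) < a ≤ 0, with a < 0 whenever λ ≠ 0. Furthermore, if L is a real vector space with symmetric bilinear form ⟨·,·⟩ and elements Θ, f with ⟨Θ,Θ⟩ = −2, ⟨Θ,f⟩ = 1, ⟨f,f⟩ = 0, then B = pΘ + qf and ω = Θ + bf satisfy ⟨B,ω⟩ = −2λ − 1; in particular, if 2λ ∉ ℤ then ⟨B,ω⟩ ∉ ℤ. -/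
theorem stmt17 (lam z : ℝ) (hz : lam ^ 2 < z)
    (e abar bbar pbar qbar b p q a : ℝ)
    (he : e = 2) (habar : abar = z - lam ^ 2) (hbbar : bbar = 2)
    (hpbar : pbar = lam) (hqbar : qbar = 0)
    (hb : b = abar + e + pbar ^ 2 * (bbar - e / 2))
    (hp : p = -pbar * (2 * bbar - e) / (2 * b - e))
    (hq : q = qbar + e / 2 * (p - pbar - 1))
    (ha : a = (bbar - e) - p ^ 2 * (b - e / 2))
    {L : Type*} [AddCommGroup L] [Module ℝ L]
    (Bf : L →ₗ[ℝ] L →ₗ[ℝ] ℝ) (hsymm : ∀ x y : L, Bf x y = Bf y x)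
    (Θ f : L) (hΘΘ : Bf Θ Θ = -2) (hΘf : Bf Θ f = 1) (hff : Bf f f = 0) :
    b = z + 2 ∧
    p = -lam / (z + 1) ∧
    q = -lam * (1 / (z + 1) + 1) - 1 ∧
    a = -lam ^ 2 / (z + 1) ∧
    2 < b ∧
    (-1 + 1 / (z + 1) < a ∧ a ≤ 0) ∧
    (lam ≠ 0 → a < 0) ∧
    Bf (p • Θ + q • f) (Θ + b • f) = -2 * lam - 1 ∧
    ((¬∃ k : ℤ, (k : ℝ) = 2 * lam) →
      ¬∃ k : ℤ, (k : ℝ) = Bf (p • Θ + q • f) (Θ + b • f)) := by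
  have hz1 : (0:ℝ) < z + 1 := by nlinarith [sq_nonneg lam]
  have hz1' : z + 1 ≠ 0 := ne_of_gt hz1
  have hB : b = z + 2 := by rw [hb, habar, he, hbbar, hpbar]; ring
  have hP : p = -lam / (z + 1) := by
    rw [hp, hpbar, hbbar, he, hB]
    rw [div_eq_div_iff (by linarith) (by linarith)]
    ring
  have hQ : q = -lam * (1 / (z + 1) + 1) - 1 := by
    rw [hq, hqbar, he, hP, hpbar]
    field_simp
    ring
  have hA : a = -lam ^ 2 / (z + 1) := by
    rw [ha, hbbar, he, hP, hB]
    field_simp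
    ring
  have hval : Bf (p • Θ + q • f) (Θ + b • f) = -2 * lam - 1 := by
    have key : Bf (p • Θ + q • f) (Θ + b • f)
        = p * (-2) + (p * b + q) * 1 + q * b * 0 := by
      simp only [map_add, map_smul, LinearMap.add_apply, LinearMap.smul_apply, smul_eq_mul,
        hΘΘ, hΘf, hff, hsymm f Θ]
      ring
    rw [key, hP, hQ, hB]
    field_simp
    ring
  refine ⟨hB, hP, hQ, hA, by linarith [sq_nonneg lam], ⟨?_, ?_⟩, ?_, hval, ?_⟩
  · rw [hA, lt_div_iff₀ hz1]
    nlinarith [one_div_mul_cancel hz1']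
  · rw [hA]
    exact div_nonpos_of_nonpos_of_nonneg (by nlinarith [sq_nonneg lam]) (le_of_lt hz1)
  · intro hl
    rw [hA]
    apply div_neg_of_neg_of_pos _ hz1
    have h2 : 0 < lam ^ 2 := by positivity
    linarith
  · intro hni ⟨k, hk⟩
    rw [hval] at hk
    exact hni ⟨-(k + 1), by push_cast; linarith⟩
end
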